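/- arXiv:1909.13074 — 3 statements merged into one kernel-verified Lean document; each statement's English description precedes it below -/
import Mathlib

section
/- Let q be a prime power and u a divisor of q−1. For every w ∈ F_q^*, the expression θ(u)·∑_{d|u} (μ(d)/φ(d))·∑_{χ_d} χ_d(w), where θ(u) = φ(u)/u, the inner sum runs over all multiplicative characters χ_d of F_q of exact order d, μ is the Möbius function and φ is Euler's totient function, equals 1 if w is u-free and equals 0 otherwise. -/
/-- A primitive element of a finite field: a generator of the cyclic group of
nonzero elements, i.e. an element of multiplicative order `q - 1`. -/
def IsPrimitiveElt {F : Type*} [Field F] [Fintype F] (α : F) : Prop :=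
  orderOf α = Fintype.card F - 1

/-- The degree of a rational function `f = f₁/f₂` in lowest terms is
`deg f₁ + deg f₂`. -/
noncomputable def ratFuncDeg {F : Type*} [Field F] (f : RatFunc F) : ℕ :=
  f.num.natDegree + f.denom.natDegree

/-- A rational function `f` over `F_q` is exceptional if `f = c · x^j · g^d`
for some `c ∈ F_q^*`, some integer `j`, some rational function `g`, and some
divisor `d > 1` of `q - 1`. -/
def IsExceptionalRatFunc (F : Type*) [Field F] [Fintype F] (f : RatFunc F) : Prop :=
  ∃ (c : F) (j : ℤ) (g : RatFunc F) (d : ℕ), c ≠ 0 ∧ 1 < d ∧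
    d ∣ (Fintype.card F - 1) ∧ f = RatFunc.C c * RatFunc.X ^ j * g ^ d

/-- `W m` is the number of squarefree divisors of `m`, i.e. `2 ^ ω(m)`. -/
def W (m : ℕ) : ℕ := 2 ^ m.primeFactors.card


/-- For `e ∣ q - 1`, an element `w ∈ F_q^*` is `e`-free if `w = v^d` with
`v ∈ F_q` and `d ∣ e` implies `d = 1`. -/
def IsEFree {F : Type*} [Field F] (e : ℕ) (w : F) : Prop :=
  ∀ (v : F) (d : ℕ), d ∣ e → w = v ^ d → d = 1

noncomputable instance {F : Type*} [Field F] [Fintype F] : Fintype (MulChar F ℂ) :=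
  Fintype.ofFinite _

/-!
Sorting the characters `χ` with `χ ^ m = 1` by their order and using orthogonality on the dual
of the subgroup of `m`-th powers gives `∑_{e ∣ m} ∑_{ord χ = e} χ w = G m` for `m ∣ q - 1`,
where `G m = m` if `w` is an `m`-th power and `0` otherwise. By Möbius inversion the inner sum
over characters of order `d` is `(μ * G) d`. An `mn`-th power with `m, n` coprime is the same as
an `m`-th power that is also an `n`-th power, so `G` is multiplicative, and the whole expression
becomes a product over the primes `p ∣ u` of
`(1 - 1/p) (1 - (G p - 1)/(p - 1)) = 1 - G p / p`,
which is `0` or `1` according as `w` is or is not a `p`-th power.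
-/

open Finset ArithmeticFunction
open scoped ArithmeticFunction.Moebius

theorem exists_pow_mul_eq_iff_of_coprime {G : Type*} [CommGroup G] {m n : ℕ} (h : m.Coprime n)
    {a : G} : (∃ v : G, v ^ (m * n) = a) ↔ (∃ v : G, v ^ m = a) ∧ ∃ v : G, v ^ n = a := by
  refine ⟨fun ⟨v, hv⟩ ↦ ⟨⟨v ^ n, by rw [← pow_mul, mul_comm, hv]⟩, ⟨v ^ m, by rw [← pow_mul, hv]⟩⟩,
    fun ⟨⟨x, hx⟩, ⟨y, hy⟩⟩ ↦ ?_⟩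
  obtain ⟨s, t, hst⟩ := Nat.isCoprime_iff_coprime.mpr h
  refine ⟨x ^ t * y ^ s, ?_⟩
  calc (x ^ t * y ^ s) ^ (m * n) = (x ^ (m : ℤ)) ^ (t * n) * (y ^ (n : ℤ)) ^ (s * m) := by
        rw [← zpow_natCast, mul_zpow, ← zpow_mul, ← zpow_mul, ← zpow_mul, ← zpow_mul]
        congr 2 <;> push_cast <;> ring
    _ = a := by rw [zpow_natCast, zpow_natCast, hx, hy, ← zpow_add, add_comm, hst, zpow_one]

theorem Units.exists_pow_eq_iff {M : Type*} [Monoid M] {n : ℕ} (hn : n ≠ 0) (a : Mˣ) :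
    (∃ v : Mˣ, v ^ n = a) ↔ ∃ v : M, v ^ n = a := by
  refine ⟨fun ⟨v, hv⟩ ↦ ⟨v, by rw [← Units.val_pow_eq_pow_val, hv]⟩, fun ⟨v, hv⟩ ↦ ?_⟩
  have hv_unit : IsUnit v := (isUnit_pow_iff hn).mp (hv ▸ a.isUnit)
  exact ⟨hv_unit.unit, Units.ext (by simpa using hv)⟩

theorem isEFree_iff_forall_prime {F : Type*} [Field F] {u : ℕ} (hu : u ≠ 0) (w : F) :
    IsEFree u w ↔ ∀ p ∈ u.primeFactors, ¬ ∃ v : F, v ^ p = w := by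
  refine ⟨fun h p hp ⟨v, hv⟩ ↦ (Nat.prime_of_mem_primeFactors hp).ne_one
    (h v p (Nat.dvd_of_mem_primeFactors hp) hv.symm), fun h v d hd hw ↦ ?_⟩
  by_contra hd1
  obtain ⟨p, hp, hpd⟩ := Nat.exists_prime_and_dvd hd1
  refine h p (Nat.mem_primeFactors.mpr ⟨hp, hpd.trans hd, hu⟩) ⟨v ^ (d / p), ?_⟩
  rw [← pow_mul, Nat.div_mul_cancel hpd, hw]

theorem Nat.totient_div_eq_prod_one_sub_inv {K : Type*} [Field K] [CharZero K] {n : ℕ}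
    (hn : n ≠ 0) : (n.totient / n : K) = ∏ p ∈ n.primeFactors, (1 - (p : K)⁻¹) := by
  have h := congrArg (Rat.cast : ℚ → K) (Nat.totient_eq_mul_prod_factors n)
  push_cast at h
  rw [h]
  field_simp

namespace ArithmeticFunction

section powerIndicator

variable {G R : Type*} [CommGroup G] [Semiring R]

open Classical in
noncomputable def powerIndicator (a : G) : ArithmeticFunction R :=
  ⟨fun e ↦ if ∃ v : G, v ^ e = a then (e : R) else 0, by simp⟩

open Classical in
theorem powerIndicator_apply (a : G) (e : ℕ) :
    powerIndicator a e = if ∃ v : G, v ^ e = a then (e : R) else 0 := rfl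

theorem isMultiplicative_powerIndicator (a : G) :
    (powerIndicator a : ArithmeticFunction R).IsMultiplicative := by
  classical
  refine ⟨by simp [powerIndicator_apply], fun {m n} hmn ↦ ?_⟩
  simp only [powerIndicator_apply, exists_pow_mul_eq_iff_of_coprime hmn, Nat.cast_mul]
  split_ifs <;> simp_all

end powerIndicator

theorem IsMultiplicative.prod_primeFactors_one_sub {R : Type*} [CommRing R]
    {f : ArithmeticFunction R} (hf : f.IsMultiplicative) {n : ℕ} (hn : n ≠ 0) :
    ∏ p ∈ n.primeFactors, (1 - f p) = ∑ d ∈ n.divisors, μ d * f d := by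
  set r := ∏ p ∈ n.primeFactors, p
  have hr : Squarefree r := Finset.squarefree_prod_of_pairwise_isCoprime
    (fun p hp q hq hpq ↦ Nat.coprime_iff_isRelPrime.mp <| (Nat.coprime_primes
      (Nat.prime_of_mem_primeFactors hp) (Nat.prime_of_mem_primeFactors hq)).mpr hpq)
    (fun p hp ↦ (Nat.prime_of_mem_primeFactors hp).squarefree)
  rw [← Nat.primeFactors_prod_primeFactors n,
    IsMultiplicative.prodPrimeFactors_one_sub_of_squarefree f hf hr]
  -- the divisors of `n` that do not divide its radical `r` are not squarefree
  refine sum_subset (Nat.divisors_subset_of_dvd hn (Nat.prod_primeFactors_dvd n))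
    fun d hd hdr ↦ ?_
  suffices ¬ Squarefree d by simp [moebius_eq_zero_of_not_squarefree this]
  intro hsq
  refine hdr (Nat.mem_divisors.mpr ⟨?_, hr.ne_zero⟩)
  rw [← Nat.prod_primeFactors_of_squarefree hsq, Nat.prod_primeFactors_dvd_iff hr.ne_zero,
    Nat.primeFactors_prod_primeFactors]
  exact Nat.primeFactors_mono (Nat.dvd_of_mem_divisors hd) hn

theorem moebius_mul_apply_prime {R : Type*} [CommRing R] (f : ArithmeticFunction R) {p : ℕ}
    (hp : p.Prime) : ((μ : ArithmeticFunction R) * f) p = f p - f 1 := by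
  rw [mul_apply, Nat.sum_divisorsAntidiagonal (fun x y ↦ (μ : ArithmeticFunction R) x * f y),
    hp.divisors, sum_pair hp.one_lt.ne, Nat.div_one, Nat.div_self hp.pos, intCoe_apply,
    intCoe_apply, moebius_apply_one, moebius_apply_prime hp]
  push_cast
  ring

theorem IsMultiplicative.totient_div_mul_sum_moebius_div_totient_mul {K : Type*} [Field K]
    [CharZero K] {G : ArithmeticFunction K} (hG : G.IsMultiplicative) {u : ℕ} (hu : u ≠ 0) :
    (u.totient / u : K) *
        ∑ d ∈ u.divisors, (μ d / d.totient : K) * ((μ : ArithmeticFunction K) * G) d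
      = ∏ p ∈ u.primeFactors, (1 - G p / p) := by
  set f : ArithmeticFunction K :=
    ⟨fun d ↦ ((μ : ArithmeticFunction K) * G) d / d.totient, by simp⟩
  have hf_apply (d : ℕ) : f d = ((μ : ArithmeticFunction K) * G) d / d.totient := rfl
  have hf : f.IsMultiplicative := by
    have hμG := isMultiplicative_moebius.intCast.mul hG
    refine ⟨by simp [hf_apply, hμG.map_one], fun {m n} hmn ↦ ?_⟩
    simp only [hf_apply, hμG.map_mul_of_coprime hmn, Nat.totient_mul hmn, Nat.cast_mul]
    ring
  have hsum : ∑ d ∈ u.divisors, (μ d / d.totient : K) * ((μ : ArithmeticFunction K) * G) d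
      = ∑ d ∈ u.divisors, μ d * f d :=
    sum_congr rfl fun d _ ↦ by rw [hf_apply]; ring
  rw [hsum, ← hf.prod_primeFactors_one_sub hu, Nat.totient_div_eq_prod_one_sub_inv hu,
    ← prod_mul_distrib]
  refine prod_congr rfl fun p hp ↦ ?_
  have hp := Nat.prime_of_mem_primeFactors hp
  have hp1 : (p : K) - 1 ≠ 0 := sub_ne_zero.mpr (by exact_mod_cast hp.one_lt.ne')
  have hp0 : (p : K) ≠ 0 := by exact_mod_cast hp.ne_zero
  rw [hf_apply, moebius_mul_apply_prime G hp, hG.map_one, Nat.totient_prime hp,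
    Nat.cast_sub hp.one_le, Nat.cast_one]
  field_simp
  ring

end ArithmeticFunction

namespace MulChar

variable {M R : Type*} [CommMonoid M] [Finite M] [CommRing R]
  [HasEnoughRootsOfUnity R (Monoid.exponent Mˣ)]

theorem mem_subgroupOrderIsoSubgroupMulChar_range_powMonoidHom_iff {d : ℕ}
    {χ : MulChar M R} :
    χ ∈ (subgroupOrderIsoSubgroupMulChar M R (powMonoidHom d).range).ofDual ↔
      orderOf χ ∣ d := by
  rw [mem_subgroupOrderIsoSubgroupMulChar_iff, orderOf_dvd_iff_pow_eq_one, eq_one_iff]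
  simp [MonoidHom.mem_range, pow_apply_coe]

variable [IsDomain R] [Fintype (MulChar M R)] [IsCyclic Mˣ]

open Classical in
theorem sum_apply_of_orderOf_dvd {d : ℕ} (hd : d ∣ Nat.card Mˣ) (a : Mˣ) :
    ∑ χ ∈ univ.filter (fun χ : MulChar M R ↦ orderOf χ ∣ d), χ a
      = if ∃ v : Mˣ, v ^ d = a then (d : R) else 0 := by
  set H := (powMonoidHom d : Mˣ →* Mˣ).range
  set X := (subgroupOrderIsoSubgroupMulChar M R H).ofDual
  have hH : a ∈ H ↔ ∀ χ ∈ X, χ a = 1 := by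
    rw [← mem_subgroupOrderIsoSubgroupMulChar_symm_iff]
    simp [X]
  have hX : Nat.card X = d := by
    rw [card_subgroupOrderIsoSubgroupMulChar, ← Subgroup.index, IsCyclic.index_powMonoidHom_range,
      Nat.gcd_eq_right hd]
  let ev : X →* R := ((mulCharEquiv M R).symm a).toMonoidHom.comp X.subtype
  have hev (χ : X) : ev χ = (χ : MulChar M R) a := mulCharEquiv_symm_apply_apply a _
  have hev_eq_one : ev = 1 ↔ ∃ v : Mˣ, v ^ d = a := by
    change ev = 1 ↔ a ∈ H
    rw [hH, DFunLike.ext_iff]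
    simp [hev]
  rw [sum_subtype (p := (· ∈ X)) _ fun χ ↦ by
    rw [mem_filter, mem_subgroupOrderIsoSubgroupMulChar_range_powMonoidHom_iff]; simp]
  simp_rw [← hev]
  rw [sum_hom_units ev, ← Nat.card_eq_fintype_card, hX]
  simp only [hev_eq_one, Nat.cast_ite, Nat.cast_zero]

open Classical in
theorem sum_apply_orderOf_eq {d : ℕ} (hd : d ∣ Nat.card Mˣ) (a : Mˣ) :
    ∑ χ ∈ univ.filter (fun χ : MulChar M R ↦ orderOf χ = d), χ a
      = ((μ : ArithmeticFunction R) * (powerIndicator a : ArithmeticFunction R)) d := by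
  have hdivisors : ∀ m > 0, m ∈ {m | m ∣ Nat.card Mˣ} →
      ∑ e ∈ m.divisors, ∑ χ ∈ univ.filter (fun χ : MulChar M R ↦ orderOf χ = e), χ a
        = powerIndicator a m := by
    intro m hm hmM
    rw [powerIndicator_apply, ← sum_apply_of_orderOf_dvd hmM a,
      ← sum_fiberwise_of_maps_to (g := orderOf) (t := m.divisors)
        fun χ hχ ↦ Nat.mem_divisors.mpr ⟨(mem_filter.mp hχ).2, hm.ne'⟩]
    refine sum_congr rfl fun e he ↦ ?_
    rw [filter_filter]
    exact sum_congr (filter_congr fun χ _ ↦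
      ⟨fun h ↦ ⟨h ▸ Nat.dvd_of_mem_divisors he, h⟩, And.right⟩) fun _ _ ↦ rfl
  rw [ArithmeticFunction.mul_apply, ← (sum_eq_iff_sum_mul_moebius_eq_on _ fun _ _ ↦ dvd_trans).mp
    hdivisors d (Nat.pos_of_dvd_of_pos hd Nat.card_pos) hd]
  simp [intCoe_apply]

end MulChar

open Classical in
/-- Vinogradov-type characteristic function for the set of `u`-free elements. -/
theorem char_fun_ufree {q : ℕ} (F : Type*) [Field F] [Fintype F]
    (hF : Fintype.card F = q) (u : ℕ) (hu : u ∣ q - 1) (w : F) (hw : w ≠ 0) :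
    ((Nat.totient u : ℂ) / (u : ℂ)) *
      ∑ d ∈ u.divisors, (((ArithmeticFunction.moebius d : ℤ) : ℂ) / (Nat.totient d : ℂ)) *
        ∑ χ ∈ Finset.univ.filter (fun χ : MulChar F ℂ => orderOf χ = d), χ w
      = if IsEFree u w then 1 else 0 := by
  subst hF
  have hcard : Nat.card Fˣ = Fintype.card F - 1 := by
    rw [Nat.card_eq_fintype_card, Fintype.card_units]
  have hu0 : u ≠ 0 := by
    rintro rfl
    have := Fintype.one_lt_card (α := F)
    omega
  have : NeZero (Monoid.exponent Fˣ : ℂ) :=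
    ⟨Nat.cast_ne_zero.mpr Monoid.exponent_ne_zero_of_finite⟩
  set a := Units.mk0 w hw
  have hchar (d : ℕ) (hd : d ∈ u.divisors) :
      ∑ χ ∈ univ.filter (fun χ : MulChar F ℂ => orderOf χ = d), χ w
        = ((μ : ArithmeticFunction ℂ) * (powerIndicator a : ArithmeticFunction ℂ)) d :=
    MulChar.sum_apply_orderOf_eq (hcard ▸ (Nat.dvd_of_mem_divisors hd).trans hu) a
  rw [sum_congr rfl fun d hd ↦ by rw [hchar d hd],
    (isMultiplicative_powerIndicator a).totient_div_mul_sum_moebius_div_totient_mul hu0,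
    isEFree_iff_forall_prime hu0]
  calc _ = ∏ p ∈ u.primeFactors, (if ¬∃ v : F, v ^ p = w then 1 else 0 : ℂ) := by
        refine prod_congr rfl fun p hp ↦ ?_
        have hp0 := (Nat.prime_of_mem_primeFactors hp).ne_zero
        rw [powerIndicator_apply, Units.exists_pow_eq_iff hp0, Units.val_mk0]
        split_ifs <;> simp [hp0]
    _ = _ := by rw [prod_boole]; congr
end

section
/- For every positive integer m, W(m) < 37.469·m^(1/6). -/
/-- The set of primes below 64. -/
def Lset : Finset ℕ := {2,3,5,7,11,13,17,19,23,29,31,37,41,43,47,53,59,61}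

lemma small_prime_mem : ∀ p < 64, p.Prime → p ∈ Lset := by decide

lemma Lset_prod : (∏ p ∈ Lset, p) = 117288381359406970983270 := by decide

lemma Lset_card : Lset.card = 18 := by decide

lemma key_nat (S : Finset ℕ) (hS : ∀ p ∈ S, p.Prime) :
    64 ^ S.card * 10 ^ 18 < 37469 ^ 6 * ∏ p ∈ S, p := by
  set T := S ∩ Lset with hT
  set U := S \ Lset with hU
  have hTU : (∏ p ∈ T, p) * ∏ p ∈ U, p = ∏ p ∈ S, p :=
    Finset.prod_inter_mul_prod_diff S Lset _
  have hUbig : ∀ p ∈ U, 64 ≤ p := by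
    intro p hp
    rcases Finset.mem_sdiff.mp hp with ⟨hpS, hpL⟩
    by_contra h
    push_neg at h
    exact hpL (small_prime_mem p h (hS p hpS))
  have hcardU : (64:ℕ) ^ U.card ≤ ∏ p ∈ U, p := by
    calc (64:ℕ) ^ U.card = ∏ _p ∈ U, 64 := (Finset.prod_const 64).symm
    _ ≤ ∏ p ∈ U, p := Finset.prod_le_prod' hUbig
  have hcards : S.card = T.card + U.card :=
    (Finset.card_inter_add_card_sdiff S Lset).symm
  have hTsub : T ⊆ Lset := Finset.inter_subset_right
  have hsmall : 64 ^ T.card * 10 ^ 18 < 37469 ^ 6 * ∏ p ∈ T, p := by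
    have hpos : 0 < ∏ p ∈ Lset \ T, p := by
      apply Finset.prod_pos
      intro p hp
      have h1 := Finset.mem_sdiff.mp hp |>.1
      fin_cases h1 <;> norm_num
    rw [← Nat.mul_lt_mul_right hpos]
    have hsplit : (∏ p ∈ Lset \ T, p) * ∏ p ∈ T, p = ∏ p ∈ Lset, p :=
      Finset.prod_sdiff hTsub
    have hle : ∏ p ∈ Lset \ T, p ≤ 64 ^ (Lset \ T).card := by
      apply Finset.prod_le_pow_card
      intro p hp
      have h1 := Finset.mem_sdiff.mp hp |>.1
      fin_cases h1 <;> norm_num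
    have hcardsplit : (Lset \ T).card + T.card = 18 := by
      rw [Finset.card_sdiff_add_card_eq_card hTsub, Lset_card]
    calc 64 ^ T.card * 10 ^ 18 * ∏ p ∈ Lset \ T, p
        ≤ 64 ^ T.card * 10 ^ 18 * 64 ^ (Lset \ T).card :=
          Nat.mul_le_mul_left _ hle
      _ = 64 ^ 18 * 10 ^ 18 := by
          rw [← hcardsplit]; ring
      _ < 37469 ^ 6 * ∏ p ∈ Lset, p := by rw [Lset_prod]; norm_num
      _ = 37469 ^ 6 * ((∏ p ∈ Lset \ T, p) * ∏ p ∈ T, p) := by rw [hsplit]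
      _ = 37469 ^ 6 * (∏ p ∈ T, p) * ∏ p ∈ Lset \ T, p := by ring
  calc 64 ^ S.card * 10 ^ 18 = (64 ^ T.card * 10 ^ 18) * 64 ^ U.card := by
        rw [hcards, pow_add]; ring
    _ ≤ (64 ^ T.card * 10 ^ 18) * ∏ p ∈ U, p :=
        Nat.mul_le_mul_left _ hcardU
    _ < (37469 ^ 6 * ∏ p ∈ T, p) * ∏ p ∈ U, p := by
        have hUpos : 0 < ∏ p ∈ U, p := by
          apply Finset.prod_pos
          intro p hp
          exact (hS p (Finset.mem_sdiff.mp hp).1).pos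
        exact (Nat.mul_lt_mul_right hUpos).mpr hsmall
    _ = 37469 ^ 6 * ∏ p ∈ S, p := by rw [mul_assoc, hTU]

theorem W_lt_mul_rpow (m : ℕ) (hm : 0 < m) :
    (W m : ℝ) < 37.469 * (m : ℝ) ^ ((1 : ℝ) / 6) := by
  have hnat : 64 ^ m.primeFactors.card * 10 ^ 18 < 37469 ^ 6 * m := by
    calc 64 ^ m.primeFactors.card * 10 ^ 18
        < 37469 ^ 6 * ∏ p ∈ m.primeFactors, p :=
          key_nat _ (fun p hp => Nat.prime_of_mem_primeFactors hp)
      _ ≤ 37469 ^ 6 * m := by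
          apply Nat.mul_le_mul_left
          exact Nat.le_of_dvd hm (Nat.prod_primeFactors_dvd m)
  have hm' : (0:ℝ) ≤ (m:ℝ) := Nat.cast_nonneg m
  have hrhs : (0:ℝ) ≤ 37.469 * (m : ℝ) ^ ((1 : ℝ) / 6) := by
    positivity
  apply lt_of_pow_lt_pow_left₀ 6 hrhs
  have hpow : ((m : ℝ) ^ ((1 : ℝ) / 6)) ^ (6:ℕ) = (m:ℝ) := by
    rw [← Real.rpow_natCast ((m:ℝ) ^ ((1:ℝ)/6)) 6, ← Real.rpow_mul hm']
    norm_num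
  rw [mul_pow, hpow]
  have hW : ((W m : ℝ)) ^ (6:ℕ) = ((64:ℝ)) ^ m.primeFactors.card := by
    rw [W]
    push_cast
    rw [← pow_mul, mul_comm, pow_mul]
    norm_num
  rw [hW]
  have hcast : ((64:ℝ)) ^ m.primeFactors.card * 10 ^ 18 < 37469 ^ 6 * (m:ℝ) := by
    exact_mod_cast hnat
  have h1018 : (0:ℝ) < 10 ^ 18 := by norm_num
  rw [show ((37.469:ℝ)) ^ (6:ℕ) = 37469 ^ 6 / 10 ^ 18 by norm_num]
  rw [div_mul_eq_mul_div, lt_div_iff₀ h1018]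
  linarith
end

section
/- For every odd positive integer m, W(m) < 21.029·m^(1/6). -/
/-- The odd primes below 64. -/
def Sfin : Finset ℕ := {3,5,7,11,13,17,19,23,29,31,37,41,43,47,53,59,61}

lemma key (m : ℕ) (hm : 0 < m) (hodd : Odd m) :
    (W m) ^ 6 * 58644190679703485491635 ≤ 2 ^ 102 * m := by
  set T := m.primeFactors with hT
  have h1 : (W m) ^ 6 = ∏ _p ∈ T, 64 := by
    simp only [W, Finset.prod_const, ← hT]
    rw [← pow_mul, mul_comm, pow_mul]; norm_num
  have hP : (58644190679703485491635 : ℕ) = ∏ p ∈ Sfin, p := by decide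
  have h2 : (2 ^ 102 : ℕ) = ∏ _p ∈ Sfin, 64 := by decide
  have hrad : ∏ p ∈ T, p ≤ m := Nat.le_of_dvd hm (Nat.prod_primeFactors_dvd m)
  have hmain : (∏ _p ∈ T, 64) * (∏ p ∈ Sfin, p)
      ≤ (∏ _p ∈ Sfin, (64:ℕ)) * (∏ p ∈ T, p) := by
    have e1 : ∀ (A B : Finset ℕ) (f : ℕ → ℕ),
        (∏ p ∈ A, f p) = ∏ p ∈ A ∪ B, (if p ∈ A then f p else 1) := by
      intro A B f
      rw [Finset.prod_ite_mem, Finset.union_inter_cancel_left]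
    rw [e1 T Sfin (fun _ => 64), e1 Sfin T (fun p => p), e1 Sfin T (fun _ => 64),
      e1 T Sfin (fun p => p), Finset.union_comm Sfin T, ← Finset.prod_mul_distrib,
      ← Finset.prod_mul_distrib]
    apply Finset.prod_le_prod'
    intro p hp
    by_cases hpT : p ∈ T <;> by_cases hpS : p ∈ Sfin <;> simp [hpT, hpS]
    · -- p ∈ T, p ∉ Sfin : need 64 ≤ p
      have hp1 : p.Prime := Nat.prime_of_mem_primeFactors hpT
      have hp2 : p ∣ m := Nat.dvd_of_mem_primeFactors hpT
      have hpodd : p ≠ 2 := by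
        rintro rfl
        have h2 := Nat.even_iff.mp ((even_iff_two_dvd).mpr hp2)
        have h3 := Nat.odd_iff.mp hodd
        omega
      by_contra hlt
      push_neg at hlt
      have h2le : 2 ≤ p := hp1.two_le
      clear_value T
      clear hp hpT h1 hT hrad hp2 hodd hm
      interval_cases p <;> revert hp1 hpS hpodd <;> decide
    · -- p ∉ T, p ∈ Sfin : p ≤ 64
      fin_cases hpS <;> norm_num
  calc (W m) ^ 6 * 58644190679703485491635
      = (∏ _p ∈ T, 64) * (∏ p ∈ Sfin, p) := by rw [h1, hP]
    _ ≤ (∏ _p ∈ Sfin, (64:ℕ)) * (∏ p ∈ T, p) := hmain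
    _ ≤ 2 ^ 102 * m := by rw [← h2]; exact Nat.mul_le_mul_left _ hrad

theorem W_lt_mul_rpow_of_odd (m : ℕ) (hm : 0 < m) (hodd : Odd m) :
    (W m : ℝ) < 21.029 * (m : ℝ) ^ ((1 : ℝ) / 6) := by
  have hmpos : (0:ℝ) < m := by exact_mod_cast hm
  have hrp : (0:ℝ) < (m : ℝ) ^ ((1:ℝ)/6) := Real.rpow_pos_of_pos hmpos _
  rw [← pow_lt_pow_iff_left₀ (by positivity) (by positivity) (n := 6) (by norm_num)]
  have h6 : ((m:ℝ) ^ ((1:ℝ)/6)) ^ (6:ℕ) = m := by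
    rw [← Real.rpow_natCast ((m:ℝ) ^ ((1:ℝ)/6)) 6, ← Real.rpow_mul hmpos.le]
    norm_num
  rw [mul_pow, h6]
  have hk' : ((W m : ℝ)) ^ 6 * 58644190679703485491635 ≤ 2 ^ 102 * m := by
    exact_mod_cast key m hm hodd
  have hc : (2:ℝ)^102 * m < (21.029 ^ 6 * m) * 58644190679703485491635 := by
    have : (2:ℝ)^102 < 21.029 ^ 6 * 58644190679703485491635 := by norm_num
    nlinarith
  exact lt_of_mul_lt_mul_right (lt_of_le_of_lt hk' hc) (by norm_num)
end
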